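/- If two nodes v1 ∈ G1 and v2 ∈ G2 (graphs from a class of graphs with at most N nodes each) satisfy exactly the same FOC2 formulas of quantifier depth at most L, then for every R²-GNN with at most L layers, v1 and v2 receive the same output feature vector. -/

import Mathlib

inductive Var : Type
  | x | y
deriving DecidableEq

structure MultiRelGraph (P1 P2 : Type) where
  V : Type
  [fintV : Fintype V]
  [decV : DecidableEq V]
  unary : P1 → V → Prop
  rel : P2 → V → V → Prop
  [decU : ∀ p, DecidablePred (unary p)]
  [decR : ∀ r, DecidableRel (rel r)]

attribute [instance] MultiRelGraph.fintV MultiRelGraph.decV MultiRelGraph.decU MultiRelGraph.decR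

inductive FOC2 (P1 P2 : Type) : Type
  | tru : FOC2 P1 P2
  | atom : P1 → Var → FOC2 P1 P2
  | rel : P2 → Var → Var → FOC2 P1 P2
  | and : FOC2 P1 P2 → FOC2 P1 P2 → FOC2 P1 P2
  | or : FOC2 P1 P2 → FOC2 P1 P2 → FOC2 P1 P2
  | not : FOC2 P1 P2 → FOC2 P1 P2
  | exge : ℕ → Var → FOC2 P1 P2 → FOC2 P1 P2

variable {P1 P2 : Type}

/-- Satisfaction of a `FOC2` formula in a multi-relational graph under an assignment. -/
def MultiRelGraph.sat (G : MultiRelGraph P1 P2) : (Var → G.V) → FOC2 P1 P2 → Prop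
  | _, .tru => True
  | σ, .atom p v => G.unary p (σ v)
  | σ, .rel r u w => G.rel r (σ u) (σ w)
  | σ, .and φ ψ => G.sat σ φ ∧ G.sat σ ψ
  | σ, .or φ ψ => G.sat σ φ ∨ G.sat σ ψ
  | σ, .not φ => ¬ G.sat σ φ
  | σ, .exge n v φ => ∃ S : Finset G.V, S.card = n ∧ ∀ a ∈ S, G.sat (Function.update σ v a) φ

/-- Quantifier depth. -/
def FOC2.depth : FOC2 P1 P2 → ℕ
  | .tru => 0
  | .atom _ _ => 0
  | .rel _ _ _ => 0
  | .and φ ψ => max φ.depth ψ.depth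
  | .or φ ψ => max φ.depth ψ.depth
  | .not φ => φ.depth
  | .exge _ _ φ => φ.depth + 1

/-- All counting thresholds are at most `m`. -/
def FOC2.thresholdsLe (m : ℕ) : FOC2 P1 P2 → Prop
  | .tru => True
  | .atom _ _ => True
  | .rel _ _ _ => True
  | .and φ ψ => φ.thresholdsLe m ∧ ψ.thresholdsLe m
  | .or φ ψ => φ.thresholdsLe m ∧ ψ.thresholdsLe m
  | .not φ => φ.thresholdsLe m
  | .exge n _ φ => n ≤ m ∧ φ.thresholdsLe m

/-- Free variables. -/
def FOC2.freeVars : FOC2 P1 P2 → Finset Var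
  | .tru => ∅
  | .atom _ v => {v}
  | .rel _ u w => {u, w}
  | .and φ ψ => φ.freeVars ∪ ψ.freeVars
  | .or φ ψ => φ.freeVars ∪ ψ.freeVars
  | .not φ => φ.freeVars
  | .exge _ v φ => φ.freeVars \ {v}

/-- Parse-tree size. -/
def FOC2.size : FOC2 P1 P2 → ℕ
  | .tru => 1
  | .atom _ _ => 1
  | .rel _ _ _ => 1
  | .and φ ψ => φ.size + ψ.size + 1
  | .or φ ψ => φ.size + ψ.size + 1
  | .not φ => φ.size + 1
  | .exge _ _ φ => φ.size + 1

/-- A generic R²-GNN run: per-layer combination functions taking the node's previous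
feature, for each relation the multiset of neighbours' features, and the global multiset. -/
def runGNN (G : MultiRelGraph P1 P2) {X : Type} (h0 : G.V → X)
    (C : ℕ → X → (P2 → Multiset X) → Multiset X → X) : ℕ → G.V → X
  | 0, v => h0 v
  | i + 1, v =>
    C i (runGNN G h0 C i v)
      (fun r => (Finset.univ.filter (fun u => G.rel r v u)).val.map (runGNN G h0 C i))
      (Finset.univ.val.map (runGNN G h0 C i))

/-!
The depth-`k` type of a node (the set of one-variable formulas of depth `≤ k` it satisfies)
determines its feature after `k` layers. For the inductive step, each depth-`k` type `t` that
occurs in `G` or `G'` is defined on the finitely many nodes of `G` and `G'` by a single formula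
`χ` of depth `≤ k`: a conjunction of formulas of `t`, one refuting each node of another type.
Then the formulas `∃≥j y (p(x, y) ∧ χ(y))` and `∃≥j y χ(y)` of depth `≤ k + 1` show that two
nodes of equal depth-`(k+1)` type have, for each relation `p`, the same number of `p`-neighbours
of type `t`, and that the two graphs have the same number of nodes of type `t`. So the
multisets aggregated by the next layer are images of equal multisets of types.
-/

open Finset Function

theorem Multiset.map_eq_map_of_map_eq_map {α β γ δ : Type*} {s : Multiset α} {t : Multiset β}
    {g : α → γ} {g' : β → γ} {f : α → δ} {f' : β → δ} (hf : ∀ a b, g a = g' b → f a = f' b)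
    (h : s.map g = t.map g') : s.map f = t.map f' := by
  rw [← Multiset.rel_eq, Multiset.rel_map] at h ⊢
  exact h.mono fun a _ b _ => hf a b

def Var.swap : Var → Var
  | .x => .y
  | .y => .x

theorem Var.swap_injective : Injective Var.swap := by
  rintro (_ | _) (_ | _) h <;> first | rfl | cases h

namespace FOC2

def swap : FOC2 P1 P2 → FOC2 P1 P2
  | .tru => .tru
  | .atom p v => .atom p v.swap
  | .rel r u w => .rel r u.swap w.swap
  | .and φ ψ => .and φ.swap ψ.swap
  | .or φ ψ => .or φ.swap ψ.swap
  | .not φ => .not φ.swap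
  | .exge n v φ => .exge n v.swap φ.swap

theorem depth_swap (φ : FOC2 P1 P2) : φ.swap.depth = φ.depth := by
  induction φ <;> simp [swap, depth, *]

theorem freeVars_swap (φ : FOC2 P1 P2) : φ.swap.freeVars = φ.freeVars.image Var.swap := by
  induction φ <;>
    simp [swap, freeVars, image_insert, image_union, image_sdiff _ _ Var.swap_injective, *]

theorem freeVars_swap_subset_y {φ : FOC2 P1 P2} (h : φ.freeVars ⊆ {Var.x}) :
    φ.swap.freeVars ⊆ {Var.y} := by
  rw [freeVars_swap]
  exact (image_subset_image h).trans (by simp [Var.swap])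

end FOC2

namespace MultiRelGraph

variable (G : MultiRelGraph P1 P2)

theorem sat_congr {φ : FOC2 P1 P2} :
    ∀ {σ σ' : Var → G.V}, (∀ v ∈ φ.freeVars, σ v = σ' v) → (G.sat σ φ ↔ G.sat σ' φ) := by
  induction φ with
  | tru => simp [sat]
  | atom p v => intro σ σ' h; simp [sat, h v (by simp [FOC2.freeVars])]
  | rel r u w =>
    intro σ σ' h
    simp [sat, h u (by simp [FOC2.freeVars]), h w (by simp [FOC2.freeVars])]
  | and φ ψ ihφ ihψ | or φ ψ ihφ ihψ =>
    intro σ σ' h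
    simp only [sat]
    rw [ihφ fun v hv => h v (mem_union_left _ hv), ihψ fun v hv => h v (mem_union_right _ hv)]
  | not φ ih => intro σ σ' h; simp only [sat]; rw [ih h]
  | exge n v φ ih =>
    intro σ σ' h
    have hupdate : ∀ a, G.sat (update σ v a) φ ↔ G.sat (update σ' v a) φ := fun a =>
      ih fun w hw => by
        rcases eq_or_ne w v with rfl | hne
        · simp
        · simpa [hne] using h w (by simp [FOC2.freeVars, hw, hne])
    simp only [sat, hupdate]

theorem sat_swap {φ : FOC2 P1 P2} :
    ∀ {σ : Var → G.V}, G.sat σ φ.swap ↔ G.sat (σ ∘ Var.swap) φ := by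
  have hupdate : ∀ (σ : Var → G.V) v a,
      update σ v.swap a ∘ Var.swap = update (σ ∘ Var.swap) v a := by
    intro σ v a; funext w; cases v <;> cases w <;> rfl
  induction φ with
  | exge n v φ ih => simp [sat, FOC2.swap, ih, hupdate]
  | _ => simp_all [sat, FOC2.swap]

theorem sat_update_y_swap {χ : FOC2 P1 P2} (hχ : χ.freeVars ⊆ {Var.x}) (u a : G.V) :
    G.sat (update (fun _ => u) .y a) χ.swap ↔ G.sat (fun _ => a) χ := by
  rw [sat_swap]
  refine G.sat_congr fun v hv => ?_
  obtain rfl := mem_singleton.1 (hχ hv)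
  rfl

open Classical in
theorem sat_exge_iff (σ : Var → G.V) (n : ℕ) (v : Var) (φ : FOC2 P1 P2) :
    G.sat σ (.exge n v φ) ↔ n ≤ #{a | G.sat (update σ v a) φ} := by
  simp only [sat, le_card_iff_exists_subset_card, subset_iff, mem_filter, mem_univ, true_and]
  exact ⟨fun ⟨S, hS, hall⟩ => ⟨S, hall, hS⟩, fun ⟨S, hall, hS⟩ => ⟨S, hS, hall⟩⟩

def theory (k : ℕ) (u : G.V) : Set (FOC2 P1 P2) :=
  {φ | φ.depth ≤ k ∧ φ.freeVars ⊆ {Var.x} ∧ G.sat (fun _ => u) φ}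

variable {G} {G' GA : MultiRelGraph P1 P2} {k : ℕ}

theorem theory_eq_iff {u : G.V} {u' : G'.V} :
    G.theory k u = G'.theory k u' ↔ ∀ φ : FOC2 P1 P2, φ.depth ≤ k → φ.freeVars ⊆ {Var.x} →
      (G.sat (fun _ => u) φ ↔ G'.sat (fun _ => u') φ) := by
  refine ⟨fun h φ hd hf => ?_, fun h => ?_⟩
  · simpa only [theory, Set.mem_ofPred_eq, hd, hf, true_and] using Set.ext_iff.1 h φ
  · ext φ
    exact and_congr_right fun hd => and_congr_right fun hf => h φ hd hf

theorem theory_eq_of_le {l : ℕ} (hkl : k ≤ l) {u : G.V} {u' : G'.V}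
    (h : G.theory l u = G'.theory l u') : G.theory k u = G'.theory k u' :=
  theory_eq_iff.2 fun φ hd hf => theory_eq_iff.1 h φ (hd.trans hkl) hf

theorem sat_of_theory_eq {w : G.V} {a : GA.V} (h : G.theory k w = GA.theory k a)
    {φ : FOC2 P1 P2} (hφ : φ ∈ GA.theory k a) : G.sat (fun _ => w) φ :=
  (h ▸ hφ).2.2

theorem and_mem_theory {u : G.V} {φ ψ : FOC2 P1 P2} (hφ : φ ∈ G.theory k u)
    (hψ : ψ ∈ G.theory k u) : .and φ ψ ∈ G.theory k u :=
  ⟨max_le hφ.1 hψ.1, union_subset hφ.2.1 hψ.2.1, hφ.2.2, hψ.2.2⟩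

theorem exists_mem_theory_not_sat {w : G.V} {a : GA.V} (h : G.theory k w ≠ GA.theory k a) :
    ∃ φ ∈ GA.theory k a, ¬ G.sat (fun _ => w) φ := by
  by_contra! hall
  refine h (theory_eq_iff.2 fun φ hd hf => ⟨fun hw => ?_, fun ha => hall φ ⟨hd, hf, ha⟩⟩)
  by_contra ha
  exact hall (.not φ) ⟨hd, hf, ha⟩ hw

theorem exists_mem_theory_sat_iff_on_finset (a : GA.V) (s : Finset G.V) :
    ∃ χ ∈ GA.theory k a, ∀ w ∈ s, G.sat (fun _ => w) χ ↔ G.theory k w = GA.theory k a := by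
  induction s using Finset.induction_on with
  | empty => exact ⟨.tru, ⟨Nat.zero_le k, empty_subset _, trivial⟩, by simp⟩
  | insert w s _ ih =>
    obtain ⟨χ, hχ, hs⟩ := ih
    by_cases hw : G.theory k w = GA.theory k a
    · refine ⟨χ, hχ, fun w' hw' => ?_⟩
      rcases mem_insert.1 hw' with rfl | hw'
      · exact iff_of_true (sat_of_theory_eq hw hχ) hw
      · exact hs w' hw'
    · obtain ⟨φ, hφ, hwφ⟩ := exists_mem_theory_not_sat hw
      refine ⟨.and χ φ, and_mem_theory hχ hφ, fun w' hw' => ?_⟩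
      rcases mem_insert.1 hw' with rfl | hw'
      · exact iff_of_false (fun h => hwφ h.2) hw
      · exact ⟨fun h => (hs w' hw').1 h.1,
          fun he => ⟨sat_of_theory_eq he hχ, sat_of_theory_eq he hφ⟩⟩

theorem exists_defining_formula (G G' : MultiRelGraph P1 P2) (k : ℕ) (t : Set (FOC2 P1 P2)) :
    ∃ χ : FOC2 P1 P2, χ.depth ≤ k ∧ χ.freeVars ⊆ {Var.x} ∧
      (∀ w : G.V, G.sat (fun _ => w) χ ↔ G.theory k w = t) ∧
      (∀ w : G'.V, G'.sat (fun _ => w) χ ↔ G'.theory k w = t) := by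
  by_cases ht : (∃ a : G.V, G.theory k a = t) ∨ (∃ b : G'.V, G'.theory k b = t)
  · obtain ⟨GA, a, rfl⟩ : ∃ (GA : MultiRelGraph P1 P2) (a : GA.V), GA.theory k a = t := by
      rcases ht with ⟨a, ha⟩ | ⟨b, hb⟩
      exacts [⟨G, a, ha⟩, ⟨G', b, hb⟩]
    obtain ⟨χ, hχ, hG⟩ := exists_mem_theory_sat_iff_on_finset (G := G) (k := k) a univ
    obtain ⟨χ', hχ', hG'⟩ := exists_mem_theory_sat_iff_on_finset (G := G') (k := k) a univ
    obtain ⟨hd, hf, -⟩ := and_mem_theory hχ hχ'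
    refine ⟨.and χ χ', hd, hf, fun w => ?_, fun w => ?_⟩
    · exact ⟨fun h => (hG w (mem_univ w)).1 h.1,
        fun he => ⟨sat_of_theory_eq he hχ, sat_of_theory_eq he hχ'⟩⟩
    · exact ⟨fun h => (hG' w (mem_univ w)).1 h.2,
        fun he => ⟨sat_of_theory_eq he hχ, sat_of_theory_eq he hχ'⟩⟩
  · push Not at ht
    exact ⟨.not .tru, Nat.zero_le k, empty_subset _,
      fun w => iff_of_false (by simp [sat]) (ht.1 w), fun w => iff_of_false (by simp [sat]) (ht.2 w)⟩

open Classical in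
theorem card_filter_sat_eq_of_theory_eq {u : G.V} {u' : G'.V}
    (h : G.theory (k + 1) u = G'.theory (k + 1) u') {ψ : FOC2 P1 P2} (hd : ψ.depth ≤ k)
    (hf : ψ.freeVars ⊆ {Var.x, Var.y}) :
    #{a | G.sat (update (fun _ => u) .y a) ψ} = #{b | G'.sat (update (fun _ => u') .y b) ψ} := by
  have hfv (j : ℕ) : (FOC2.exge j .y ψ).freeVars ⊆ {Var.x} := by
    intro v hv
    have := hf (mem_sdiff.1 hv).1
    simp_all [FOC2.freeVars]
  refine eq_of_forall_le_iff fun j => ?_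
  rw [← sat_exge_iff, ← sat_exge_iff]
  exact theory_eq_iff.1 h _ (Nat.succ_le_succ hd) (hfv j)

open Classical in
theorem count_map_theory_filter {u : G.V} {t : Set (FOC2 P1 P2)} {χ : FOC2 P1 P2}
    (hχf : χ.freeVars ⊆ {Var.x}) (hχ : ∀ w : G.V, G.sat (fun _ => w) χ ↔ G.theory k w = t)
    (γ : FOC2 P1 P2) :
    ((univ.filter fun a => G.sat (update (fun _ => u) .y a) γ).val.map (G.theory k)).count t =
      #{a | G.sat (update (fun _ => u) .y a) (.and γ χ.swap)} := by
  rw [Multiset.count_map, ← filter_val, filter_filter, card_val]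
  congr! 2 with a
  simp only [sat, sat_update_y_swap G hχf, hχ, eq_comm]

-- The guard `γ` is `p(x, y)` for the aggregation over `p`-neighbours and `⊤` for the global one.
open Classical in
theorem map_theory_filter_eq_of_theory_eq {u : G.V} {u' : G'.V}
    (h : G.theory (k + 1) u = G'.theory (k + 1) u') {γ : FOC2 P1 P2} (hd : γ.depth ≤ k)
    (hf : γ.freeVars ⊆ {Var.x, Var.y}) :
    (univ.filter fun a => G.sat (update (fun _ => u) .y a) γ).val.map (G.theory k) =
      (univ.filter fun b => G'.sat (update (fun _ => u') .y b) γ).val.map (G'.theory k) := by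
  ext t
  obtain ⟨χ, hχd, hχf, hG, hG'⟩ := exists_defining_formula G G' k t
  rw [count_map_theory_filter hχf hG, count_map_theory_filter hχf hG']
  refine card_filter_sat_eq_of_theory_eq h (max_le hd (by rwa [FOC2.depth_swap])) ?_
  exact union_subset hf ((FOC2.freeVars_swap_subset_y hχf).trans (by simp))

end MultiRelGraph

open MultiRelGraph in
theorem runGNN_eq_of_theory_eq {X : Type} (ι : (P1 → Bool) → X)
    (C : ℕ → X → (P2 → Multiset X) → Multiset X → X) (k : ℕ) :
    ∀ {G G' : MultiRelGraph P1 P2} {u : G.V} {u' : G'.V}, G.theory k u = G'.theory k u' →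
      runGNN G (fun a => ι fun p => decide (G.unary p a)) C k u =
        runGNN G' (fun a => ι fun p => decide (G'.unary p a)) C k u' := by
  induction k with
  | zero =>
    intro G G' u u' h
    simp only [runGNN]
    congr 1
    funext p
    exact decide_eq_decide.2 (theory_eq_iff.1 h (.atom p .x) le_rfl (by simp [FOC2.freeVars]))
  | succ k ih =>
    intro G G' u u' h
    have hmap {s : Finset G.V} {s' : Finset G'.V}
        (hs : s.val.map (G.theory k) = s'.val.map (G'.theory k)) :
        s.val.map (runGNN G _ C k) = s'.val.map (runGNN G' _ C k) :=
      Multiset.map_eq_map_of_map_eq_map (fun _ _ => ih) hs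
    simp only [runGNN]
    congr 1
    · exact ih (theory_eq_of_le k.le_succ h)
    · funext r
      apply hmap
      simpa [sat] using map_theory_filter_eq_of_theory_eq h (γ := .rel r .x .y)
        (by simp [FOC2.depth]) (by simp [FOC2.freeVars])
    · apply hmap
      have hglobal := map_theory_filter_eq_of_theory_eq h (γ := .tru) (Nat.zero_le k)
        (by simp [FOC2.freeVars])
      classical
      convert hglobal using 3 <;> exact (filter_true_of_mem fun _ _ => by trivial).symm

theorem stmt12_general {P1 P2 : Type} (L : ℕ)
    (G1 G2 : MultiRelGraph P1 P2)
    (v1 : G1.V) (v2 : G2.V)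
    (hiff : ∀ φ : FOC2 P1 P2, φ.depth ≤ L → φ.freeVars ⊆ {Var.x} →
      (G1.sat (fun _ => v1) φ ↔ G2.sat (fun _ => v2) φ)) :
    ∀ (X : Type) (ι : (P1 → Bool) → X)
      (C : ℕ → X → (P2 → Multiset X) → Multiset X → X) (L' : ℕ), L' ≤ L →
      runGNN G1 (fun u => ι (fun p => decide (G1.unary p u))) C L' v1 =
        runGNN G2 (fun u => ι (fun p => decide (G2.unary p u))) C L' v2 := by
  intro X ι C L' hL'
  exact runGNN_eq_of_theory_eq ι C L'
    (MultiRelGraph.theory_eq_of_le hL' (MultiRelGraph.theory_eq_iff.2 hiff))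

/-- If two nodes of graphs with at most `N` nodes satisfy exactly the same `FOC2`
formulas of quantifier depth at most `L`, then every R²-GNN with at most `L` layers
(arbitrary initialization encoding of the unary one-hot information and arbitrary
per-layer combination functions) assigns them the same feature. -/
theorem stmt12 {P1 P2 : Type} (N L : ℕ)
    (G1 G2 : MultiRelGraph P1 P2)
    (h1 : Fintype.card G1.V ≤ N) (h2 : Fintype.card G2.V ≤ N)
    (v1 : G1.V) (v2 : G2.V)
    (hiff : ∀ φ : FOC2 P1 P2, φ.depth ≤ L → φ.freeVars ⊆ {Var.x} →
      (G1.sat (fun _ => v1) φ ↔ G2.sat (fun _ => v2) φ)) :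
    ∀ (X : Type) (ι : (P1 → Bool) → X)
      (C : ℕ → X → (P2 → Multiset X) → Multiset X → X) (L' : ℕ), L' ≤ L →
      runGNN G1 (fun u => ι (fun p => decide (G1.unary p u))) C L' v1 =
        runGNN G2 (fun u => ι (fun p => decide (G2.unary p u))) C L' v2 :=
  stmt12_general L G1 G2 v1 v2 hiff
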